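/- arXiv:1710.01221 — 4 statements merged into one kernel-verified Lean document; each statement's English description precedes it below -/
import Mathlib

section
/- Let μ : [0,∞) → ℝ be locally Lipschitz. Fix L, K > 0 with |μ(y) - μ(0)| ≤ Ky for all y ∈ [0, L], and fix x₁ ∈ (0, L]. Then for all x ∈ [0, x₁], |∫_{x₁}^{x} (μ(y) - μ(0))/y dy| ≤ K(x₁ - x). Consequently, with μ₀ = μ(0) and constants σ, M > 0, the integrating factor ζ(x) = exp((2/σ²)∫_{x₁}^x (μ(y) - M)/y dy) satisfies ζ(x) ~ C·x^{(2/σ²)(μ₀ - M)} as x → 0⁺ for some constant C > 0, in the sense that ζ(x)/x^{(2/σ²)(μ₀ - M)} converges to a finite positive limit. -/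
/-!
Split `(μ y - M) / y = (μ y - μ 0) / y + (μ 0 - M) / y`. The second term integrates to
`(μ 0 - M) (log x - log x₁)`, which cancels the power of `x` exactly. The first is bounded by `K`
on `(0, x₁]`, hence integrable up to `0`, so its integral from `x₁` converges as `x → 0⁺`, and
`C = exp ((2/σ²) ∫_{x₁}^0 (μ y - μ 0) / y dy) / x₁ ^ ((2/σ²) (μ 0 - M))`.
-/

open MeasureTheory intervalIntegral Filter Set Topology Real
open scoped Interval

theorem IntervalIntegrable.of_norm_le_const {E : Type*} [NormedAddCommGroup E]
    {f : ℝ → E} {a b C : ℝ} (hf : AEStronglyMeasurable f (volume.restrict (Ι a b)))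
    (h : ∀ y ∈ Ι a b, ‖f y‖ ≤ C) : IntervalIntegrable f volume a b :=
  (intervalIntegrable_const (c := C)).mono_fun' hf
    ((ae_restrict_mem measurableSet_uIoc).mono h)

theorem tendsto_intervalIntegral_nhdsGT {E : Type*} [NormedAddCommGroup E] [NormedSpace ℝ E]
    {f : ℝ → E} {a b : ℝ} (hab : a < b) (hf : IntervalIntegrable f volume a b) :
    Tendsto (fun x => ∫ y in b..x, f y) (𝓝[>] a) (𝓝 (∫ y in b..a, f y)) := by
  have hcont := continuousOn_primitive_interval' hf right_mem_uIcc a left_mem_uIcc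
  rw [uIcc_of_le hab.le] at hcont
  exact (hcont.mono_of_mem_nhdsWithin (Icc_mem_nhdsGT hab)).tendsto

theorem integral_add_const_div {f : ℝ → ℝ} {a b : ℝ} (ha : 0 < a) (hb : 0 < b)
    (hf : IntervalIntegrable f volume a b) (c : ℝ) :
    ∫ y in a..b, (f y + c / y) = (∫ y in a..b, f y) + c * (log b - log a) := by
  have hinv : IntervalIntegrable (fun y : ℝ => y⁻¹) volume a b :=
    intervalIntegrable_inv (fun y hy => (lt_min ha hb |>.trans_le hy.1).ne')
      continuousOn_id
  simp only [div_eq_mul_inv c]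
  rw [integral_add hf (hinv.const_mul c), intervalIntegral.integral_const_mul,
    integral_inv_of_pos ha hb, log_div hb.ne' ha.ne']

theorem exp_mul_add_log_sub_log_div_rpow {x b : ℝ} (hx : 0 < x) (hb : 0 < b) (c d F : ℝ) :
    exp (c * (F + d * (log x - log b))) / x ^ (c * d) = exp (c * F) / b ^ (c * d) := by
  rw [rpow_def_of_pos hx, rpow_def_of_pos hb, div_eq_div_iff (by positivity) (by positivity),
    ← exp_add, ← exp_add]
  ring_nf

theorem integrating_factor_asymptotics_general (μ : ℝ → ℝ) (K L x₁ σ M : ℝ)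
    (hLoc : LocallyLipschitz μ)
    (hbound : ∀ y ∈ Set.Icc (0 : ℝ) L, |μ y - μ 0| ≤ K * y)
    (hx₁ : x₁ ∈ Set.Ioc (0 : ℝ) L) :
    (∀ x ∈ Set.Icc (0 : ℝ) x₁,
      |∫ y in x₁..x, (μ y - μ 0) / y| ≤ K * (x₁ - x)) ∧
    (∃ C : ℝ, 0 < C ∧
      Filter.Tendsto
        (fun x =>
          Real.exp ((2 / σ ^ 2) * ∫ y in x₁..x, (μ y - M) / y) /
            x ^ ((2 / σ ^ 2) * (μ 0 - M)))
        (nhdsWithin 0 (Set.Ioi 0)) (nhds C)) := by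
  obtain ⟨hx₁0, hx₁L⟩ := hx₁
  set f : ℝ → ℝ := fun y => (μ y - μ 0) / y
  have hfK : ∀ y ∈ Ioc 0 x₁, ‖f y‖ ≤ K := fun y hy => by
    rw [norm_div, norm_of_nonneg hy.1.le, div_le_iff₀ hy.1]
    exact hbound y ⟨hy.1.le, hy.2.trans hx₁L⟩
  have hfint : IntervalIntegrable f volume 0 x₁ :=
    .of_norm_le_const ((hLoc.continuous.measurable.sub measurable_const).div
      measurable_id).aestronglyMeasurable fun y hy => hfK y (by rwa [uIoc_of_le hx₁0.le] at hy)
  refine ⟨fun x hx => ?_, ?_⟩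
  · have hsub : Ι x₁ x ⊆ Ioc 0 x₁ := by
      rw [uIoc_of_ge hx.2]
      exact Ioc_subset_Ioc_left hx.1
    calc |∫ y in x₁..x, f y| ≤ K * |x - x₁| :=
          norm_integral_le_of_norm_le_const fun y hy => hfK y (hsub hy)
      _ = K * (x₁ - x) := by rw [abs_sub_comm, abs_of_nonneg (sub_nonneg.2 hx.2)]
  set c := 2 / σ ^ 2
  refine ⟨exp (c * ∫ y in x₁..0, f y) / x₁ ^ (c * (μ 0 - M)), by positivity, ?_⟩
  refine (((continuous_exp.tendsto _).comp
    ((tendsto_intervalIntegral_nhdsGT hx₁0 hfint).const_mul c)).div_const _).congr' ?_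
  filter_upwards [Ioo_mem_nhdsGT hx₁0] with x hx
  have hsplit : ∫ y in x₁..x, (μ y - M) / y
      = (∫ y in x₁..x, f y) + (μ 0 - M) * (log x - log x₁) := by
    rw [← integral_add_const_div hx₁0 hx.1 (hfint.symm.mono_set (uIcc_subset_uIcc
      left_mem_uIcc (mem_uIcc_of_ge hx.1.le hx.2.le)))]
    exact integral_congr fun y _ => by ring
  rw [Function.comp_apply, hsplit, exp_mul_add_log_sub_log_div_rpow hx.1 hx₁0]

/-- Integral bound near 0 from the local Lipschitz property of μ, and the
resulting asymptotics of the integrating factor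
ζ(x) = exp((2/σ²)∫_{x₁}^x (μ(y) - M)/y dy) ~ C x^{(2/σ²)(μ₀ - M)} as x → 0⁺. -/
theorem integrating_factor_asymptotics (μ : ℝ → ℝ) (K L x₁ σ M : ℝ)
    (hLoc : LocallyLipschitz μ)
    (hK : 0 < K) (hL : 0 < L)
    (hbound : ∀ y ∈ Set.Icc (0 : ℝ) L, |μ y - μ 0| ≤ K * y)
    (hx₁ : x₁ ∈ Set.Ioc (0 : ℝ) L) (hσ : 0 < σ) (hM : 0 < M) :
    (∀ x ∈ Set.Icc (0 : ℝ) x₁,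
      |∫ y in x₁..x, (μ y - μ 0) / y| ≤ K * (x₁ - x)) ∧
    (∃ C : ℝ, 0 < C ∧
      Filter.Tendsto
        (fun x =>
          Real.exp ((2 / σ ^ 2) * ∫ y in x₁..x, (μ y - M) / y) /
            x ^ ((2 / σ ^ 2) * (μ 0 - M)))
        (nhdsWithin 0 (Set.Ioi 0)) (nhds C)) :=
  integrating_factor_asymptotics_general μ K L x₁ σ M hLoc hbound hx₁
end

section
/- Let σ, M, ρ > 0, μ₀ ∈ ℝ with μ₀ < M. Consider a solution φ on (0, x₀) of the linear ODE φ'(x) + γ(x)φ(x) = β(x), where γ(x) = 2(μ(x) - M)/(σ²x), β(x) = 2(ρ - Mx)/(σ²x²), and μ is locally Lipschitz with μ(0) = μ₀. Then lim_{x→0⁺} φ(x) = +∞ or lim_{x→0⁺} φ(x) = -∞; in particular φ is unbounded near 0. -/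
/-! Since `μ(0) = μ₀ < M`, near `0` the coefficient `γ(x) = 2(μ(x) - M)/(σ²x)` is nonpositive and
bounded below by a multiple of `-1/x`, while the source `2(ρ - Mx)/(σ²x²)` is at least `ρ/(σ²x²)`.
Hence for a small `k > 0` the shifted function `ψ = φ + k/x` satisfies `ψ' + γψ ≥ 0`, so `ψ` times
the integrating factor `exp ∫_b^x γ` is nondecreasing. That factor is `≥ 1` for `x ≤ b`, so `ψ` is
bounded above near `0` and `φ ≤ C - k/x → -∞`. -/

open Set Filter Topology

theorem le_max_of_hasDerivAt_add_mul_nonneg {ψ ψ' γ : ℝ → ℝ} {U : Set ℝ} {x b : ℝ}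
    (hU : IsOpen U) (hxb : x ≤ b) (hIcc : Icc x b ⊆ U) (hγ : ContinuousOn γ U)
    (hγ_nonpos : ∀ t ∈ Icc x b, γ t ≤ 0) (hψ : ∀ t ∈ Icc x b, HasDerivAt ψ (ψ' t) t)
    (h : ∀ t ∈ Icc x b, 0 ≤ ψ' t + γ t * ψ t) :
    ψ x ≤ max (ψ b) 0 := by
  set G : ℝ → ℝ := fun t => ∫ u in b..t, γ u
  have hG : ∀ t ∈ Icc x b, HasDerivAt G (γ t) t := fun t ht =>
    intervalIntegral.integral_hasDerivAt_right
      (hγ.mono ((uIcc_subset_Icc ⟨hxb, le_rfl⟩ ht).trans hIcc)).intervalIntegrable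
      (hγ.stronglyMeasurableAtFilter hU t (hIcc ht)) (hγ.continuousAt (hU.mem_nhds (hIcc ht)))
  have hG_nonneg : 0 ≤ G x := by
    have h_neg : 0 ≤ ∫ u in x..b, -γ u :=
      intervalIntegral.integral_nonneg hxb fun t ht => neg_nonneg.mpr (hγ_nonpos t ht)
    rwa [intervalIntegral.integral_neg, ← intervalIntegral.integral_symm] at h_neg
  have hmono : MonotoneOn (fun t => Real.exp (G t) * ψ t) (Icc x b) := by
    refine monotoneOn_of_hasDerivWithinAt_nonneg (convex_Icc x b)
      (fun t ht => (((hG t ht).exp.mul (hψ t ht)).continuousAt).continuousWithinAt)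
      (fun t ht =>
        ((hG t (interior_subset ht)).exp.mul (hψ t (interior_subset ht))).hasDerivWithinAt)
      (fun t ht => ?_)
    nlinarith [h t (interior_subset ht), Real.exp_pos (G t)]
  have hζψ : Real.exp (G x) * ψ x ≤ ψ b := by
    simpa [G] using hmono ⟨le_rfl, hxb⟩ ⟨hxb, le_rfl⟩ hxb
  rcases le_or_gt (ψ x) 0 with hψx | hψx
  · exact le_max_of_le_right hψx
  · refine le_max_of_le_left (le_trans ?_ hζψ)
    nlinarith [Real.add_one_le_exp (G x)]

theorem tendsto_nhdsGT_zero_atBot_of_le_sub_mul_inv {f : ℝ → ℝ} {C k : ℝ} (hk : 0 < k)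
    (hf : ∀ᶠ x in 𝓝[>] 0, f x ≤ C - k * x⁻¹) : Tendsto f (𝓝[>] 0) atBot := by
  refine tendsto_atBot_mono' _ hf ?_
  simpa only [sub_eq_add_neg, Function.comp_def] using tendsto_atBot_add_const_left _ C
    (tendsto_neg_atTop_atBot.comp (tendsto_inv_nhdsGT_zero.const_mul_atTop hk))

theorem shifted_solution_deriv_add_mul_nonneg {σ M ρ k d m t y : ℝ} (hσ : 0 < σ) (ht : 0 < t)
    (hk : 0 ≤ k) (hMt : 2 * M * t ≤ ρ) (hm : -d ≤ 2 * (m - M)) (hkρ : k * (d + σ ^ 2) ≤ ρ) :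
    0 ≤ 2 * (ρ - M * t) / (σ ^ 2 * t ^ 2) - 2 * (m - M) / (σ ^ 2 * t) * y + k * -(t ^ 2)⁻¹
      + 2 * (m - M) / (σ ^ 2 * t) * (y + k * t⁻¹) := by
  have hnum : 0 ≤ 2 * (ρ - M * t) + k * (2 * (m - M) - σ ^ 2) := by nlinarith
  have hrw : 2 * (ρ - M * t) / (σ ^ 2 * t ^ 2) - 2 * (m - M) / (σ ^ 2 * t) * y + k * -(t ^ 2)⁻¹
      + 2 * (m - M) / (σ ^ 2 * t) * (y + k * t⁻¹)
      = (2 * (ρ - M * t) + k * (2 * (m - M) - σ ^ 2)) / (σ ^ 2 * t ^ 2) := by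
    field_simp
    ring
  rw [hrw]
  positivity

theorem ode_blowup_at_zero_general (μ φ : ℝ → ℝ) (σ M ρ μ₀ x₀ : ℝ)
    (hσ : 0 < σ) (hρ : 0 < ρ) (hx₀ : 0 < x₀)
    (hμ₀ : μ 0 = μ₀) (hμ₀M : μ₀ < M)
    (hLoc : LocallyLipschitz μ)
    (hode : ∀ x ∈ Set.Ioo (0 : ℝ) x₀,
      HasDerivAt φ (2 * (ρ - M * x) / (σ ^ 2 * x ^ 2)
        - 2 * (μ x - M) / (σ ^ 2 * x) * φ x) x) :
    Filter.Tendsto φ (nhdsWithin 0 (Set.Ioi 0)) Filter.atTop ∨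
    Filter.Tendsto φ (nhdsWithin 0 (Set.Ioi 0)) Filter.atBot := by
  right
  have hμ : Continuous μ := hLoc.continuous
  -- near `0`, `μ t > 2μ₀ - M` gives `2(μ t - M) ≥ -4(M - μ₀)`, which dictates the choice of `k`
  set k := ρ / (4 * (M - μ₀) + σ ^ 2)
  have hk : 0 < k := div_pos hρ (by nlinarith)
  have hkρ : k * (4 * (M - μ₀) + σ ^ 2) = ρ := div_mul_cancel₀ ρ (by nlinarith)
  have hnear : ∀ᶠ t in 𝓝[>] 0, t < x₀ ∧ 2 * M * t ≤ ρ ∧ μ t ∈ Ioo (2 * μ₀ - M) M := by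
    refine (eventually_lt_nhds hx₀).and (Eventually.and ?_ ?_) |>.filter_mono nhdsWithin_le_nhds
    · exact (continuous_const.mul continuous_id).tendsto' 0 0 (by simp)
        |>.eventually (eventually_le_nhds hρ)
    · exact hμ.tendsto' 0 μ₀ hμ₀ |>.eventually (Ioo_mem_nhds (by linarith) hμ₀M)
  obtain ⟨a, ha : 0 < a, hsub⟩ := mem_nhdsGT_iff_exists_Ioo_subset.mp hnear
  have hγ : ContinuousOn (fun t => 2 * (μ t - M) / (σ ^ 2 * t)) (Ioo 0 a) :=
    (by fun_prop : Continuous fun t => 2 * (μ t - M)).continuousOn.div (by fun_prop)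
      fun t ht => (mul_pos (pow_pos hσ 2) ht.1).ne'
  have hbound : ∀ x ∈ Ioc 0 (a / 2), φ x + k * x⁻¹ ≤ max (φ (a / 2) + k * (a / 2)⁻¹) 0 := by
    intro x hx
    have hIcc : Icc x (a / 2) ⊆ Ioo 0 a := Icc_subset_Ioo hx.1 (by linarith)
    exact le_max_of_hasDerivAt_add_mul_nonneg (ψ := fun t => φ t + k * t⁻¹) isOpen_Ioo hx.2 hIcc hγ
      (fun t ht => div_nonpos_of_nonpos_of_nonneg (by linarith [(hsub (hIcc ht)).2.2.2])
        (mul_pos (pow_pos hσ 2) (hIcc ht).1).le)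
      (fun t ht => (hode t ⟨(hIcc ht).1, (hsub (hIcc ht)).1⟩).add
        ((hasDerivAt_inv (hIcc ht).1.ne').const_mul k))
      (fun t ht => shifted_solution_deriv_add_mul_nonneg hσ (hIcc ht).1 hk.le (hsub (hIcc ht)).2.1
        (by linarith [(hsub (hIcc ht)).2.2.1]) hkρ.le)
  refine tendsto_nhdsGT_zero_atBot_of_le_sub_mul_inv (C := max (φ (a / 2) + k * (a / 2)⁻¹) 0) hk ?_
  filter_upwards [Ioc_mem_nhdsGT (half_pos ha)] with x hx
  linarith [hbound x hx]

/-- Case μ₀ < M: any solution on (0, x₀) of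
φ'(x) + (2(μ(x) - M)/(σ²x))φ(x) = 2(ρ - Mx)/(σ²x²)
blows up to +∞ or -∞ as x → 0⁺. -/
theorem ode_blowup_at_zero (μ φ : ℝ → ℝ) (σ M ρ μ₀ x₀ : ℝ)
    (hσ : 0 < σ) (hM : 0 < M) (hρ : 0 < ρ) (hx₀ : 0 < x₀)
    (hμ₀ : μ 0 = μ₀) (hμ₀M : μ₀ < M)
    (hLoc : LocallyLipschitz μ)
    (hode : ∀ x ∈ Set.Ioo (0 : ℝ) x₀,
      HasDerivAt φ (2 * (ρ - M * x) / (σ ^ 2 * x ^ 2)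
        - 2 * (μ x - M) / (σ ^ 2 * x) * φ x) x) :
    Filter.Tendsto φ (nhdsWithin 0 (Set.Ioi 0)) Filter.atTop ∨
    Filter.Tendsto φ (nhdsWithin 0 (Set.Ioi 0)) Filter.atBot :=
  ode_blowup_at_zero_general μ φ σ M ρ μ₀ x₀ hσ hρ hx₀ hμ₀ hμ₀M hLoc hode
end

section
/- Let σ, M, ρ > 0 and μ locally Lipschitz, decreasing, with μ(x) → -∞ as x → ∞. Suppose φ solves φ'(x) + (2μ(x)/(σ²x))φ(x) = 2ρ/(σ²x²) on (χ, ∞) for some χ > 0. Let ζ(x) = exp((2/σ²)∫_{x₁}^x μ(y)/y dy) with x₁ > χ chosen so that μ(y) < -c < -σ²/2 for y ≥ x₁. If the constant J := ζ(x₀)φ(x₀) + ∫_{x₀}^∞ ζ(y)·(2ρ/(σ²y²)) dy is > 0 then φ(x)/x → +∞ as x → ∞; if J ≤ 0 then φ(x) < 0 for all x > x₀. -/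
/-!
The function `ζ` is an integrating factor: `(ζ φ)' = ζ β` with `β y = 2ρ / (σ² y²) > 0`, and
`ζ ≤ 1` on `[x₁, ∞)` makes `ζ β` integrable there, so `ζ φ` increases strictly to `J`.
If `J ≤ 0` this forces `ζ φ < 0` beyond `x₀`. If `J > 0`, write `φ x / x = ζ φ / (x ζ)`:
since `μ ≤ -c` gives `ζ x ≤ (x / x₁) ^ (-p)` with `p = 2c / σ² > 1`, `x ζ x → 0⁺`.
-/

open MeasureTheory intervalIntegral Filter Set Topology

theorem hasDerivAt_mul_of_linear_ode {ζ φ : ℝ → ℝ} {a b x : ℝ}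
    (hζ : HasDerivAt ζ (a * ζ x) x) (hφ : HasDerivAt φ (b - a * φ x) x) :
    HasDerivAt (fun x => ζ x * φ x) (ζ x * b) x :=
  (hζ.mul hφ).congr_deriv (by ring)

section ImproperIntegral

variable {g f : ℝ → ℝ} {x₀ : ℝ}

theorem tendsto_add_integral_Ioi_of_hasDerivAt (hderiv : ∀ x ∈ Ici x₀, HasDerivAt g (f x) x)
    (hf : IntegrableOn f (Ioi x₀)) :
    Tendsto g atTop (𝓝 (g x₀ + ∫ y in Ioi x₀, f y)) := by
  refine ((intervalIntegral_tendsto_integral_Ioi x₀ hf tendsto_id).const_add (g x₀)).congr' ?_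
  filter_upwards [eventually_ge_atTop x₀] with x hx
  rw [id, integral_eq_sub_of_hasDerivAt (fun y hy => hderiv y (uIcc_of_le hx ▸ hy).1)
    ((intervalIntegrable_iff_integrableOn_Ioc_of_le hx).2 (hf.mono_set Ioc_subset_Ioi_self))]
  ring

theorem lt_add_integral_Ioi_of_hasDerivAt_pos (hderiv : ∀ x ∈ Ici x₀, HasDerivAt g (f x) x)
    (hf : IntegrableOn f (Ioi x₀)) (hpos : ∀ x ∈ Ioi x₀, 0 < f x) {x : ℝ} (hx : x₀ ≤ x) :
    g x < g x₀ + ∫ y in Ioi x₀, f y := by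
  have hmono : StrictMonoOn g (Ici x₀) := by
    refine strictMonoOn_of_hasDerivWithinAt_pos (convex_Ici x₀)
      (fun y hy => (hderiv y hy).continuousAt.continuousWithinAt)
      (fun y hy => (hderiv y (interior_subset hy)).hasDerivWithinAt) ?_
    rw [interior_Ici]
    exact hpos
  calc g x < g (x + 1) := hmono hx (show x₀ ≤ x + 1 by linarith) (by linarith)
    _ ≤ _ := ge_of_tendsto (tendsto_add_integral_Ioi_of_hasDerivAt hderiv hf) <|
        (eventually_ge_atTop (x + 1)).mono fun y hy =>
          hmono.monotoneOn (show x₀ ≤ x + 1 by linarith) (show x₀ ≤ y by linarith) hy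

end ImproperIntegral

theorem integrableOn_Ioi_div_mul_sq {a b x₀ : ℝ} (hx₀ : 0 < x₀) :
    IntegrableOn (fun y => a / (b * y ^ 2)) (Ioi x₀) := by
  refine IntegrableOn.congr_fun
    ((integrableOn_Ioi_rpow_of_lt (by norm_num : (-2 : ℝ) < -1) hx₀).const_mul (a / b))
    (fun y hy => ?_) measurableSet_Ioi
  rw [Real.rpow_neg (hx₀.trans hy).le, Real.rpow_two]
  ring

theorem tendsto_div_atTop_of_tendsto_mul {ζ φ : ℝ → ℝ} {J : ℝ} (hJ : 0 < J)
    (hζφ : Tendsto (fun x => ζ x * φ x) atTop (𝓝 J))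
    (hxζ : Tendsto (fun x => x * ζ x) atTop (𝓝[>] 0)) :
    Tendsto (fun x => φ x / x) atTop atTop := by
  refine (hζφ.pos_mul_atTop hJ (tendsto_inv_nhdsGT_zero.comp hxζ)).congr' ?_
  filter_upwards [hxζ.eventually self_mem_nhdsWithin] with x hx
  have hζ : ζ x ≠ 0 := right_ne_zero_of_mul (mem_Ioi.1 hx).ne'
  simp only [Function.comp_apply]
  field_simp

noncomputable def integratingFactor (κ x₁ : ℝ) (μ : ℝ → ℝ) (x : ℝ) : ℝ :=
  Real.exp (κ * ∫ y in x₁..x, μ y / y)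

namespace integratingFactor

variable {μ : ℝ → ℝ} {κ c x₁ x : ℝ}

theorem pos : 0 < integratingFactor κ x₁ μ x := Real.exp_pos _

theorem hasDerivAt (hμ : ContinuousOn μ (Ioi 0)) (hx₁ : 0 < x₁) (hx : 0 < x) :
    HasDerivAt (integratingFactor κ x₁ μ) (κ * (μ x / x) * integratingFactor κ x₁ μ x) x := by
  have hcont : ContinuousOn (fun y => μ y / y) (Ioi 0) :=
    hμ.div continuousOn_id fun y hy => hy.ne'
  have hsub : uIcc x₁ x ⊆ Ioi 0 := fun y hy => lt_min hx₁ hx |>.trans_le hy.1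
  have hprim : HasDerivAt (fun u => ∫ y in x₁..u, μ y / y) (μ x / x) x :=
    integral_hasDerivAt_right ((hcont.mono hsub).intervalIntegrable)
      (hcont.stronglyMeasurableAtFilter isOpen_Ioi x hx)
      (hcont.continuousAt (Ioi_mem_nhds hx))
  exact (hprim.const_mul κ).exp.congr_deriv (mul_comm _ _)

theorem intervalIntegral_le_neg_mul_log (hμ : ContinuousOn μ (Ioi 0)) (hx₁ : 0 < x₁)
    (hμc : ∀ y, x₁ ≤ y → μ y ≤ -c) (hx : x₁ ≤ x) :
    ∫ y in x₁..x, μ y / y ≤ -c * Real.log (x / x₁) := by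
  have hsub : uIcc x₁ x ⊆ Ioi 0 := fun y hy => hx₁.trans_le (uIcc_of_le hx ▸ hy).1
  calc ∫ y in x₁..x, μ y / y ≤ ∫ y in x₁..x, -c * y⁻¹ := by
        refine integral_mono_on hx ?_ ?_ fun y hy => ?_
        · exact ((hμ.div continuousOn_id fun y hy => hy.ne').mono hsub).intervalIntegrable
        · exact (continuousOn_const.mul (continuousOn_inv₀.mono
            fun y hy => (hsub hy).ne')).intervalIntegrable
        · rw [← div_eq_mul_inv]
          exact div_le_div_of_nonneg_right (hμc y hy.1) (hx₁.trans_le hy.1).le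
    _ = -c * Real.log (x / x₁) := by
        rw [intervalIntegral.integral_const_mul, integral_inv fun h => lt_irrefl (0 : ℝ) (hsub h)]

theorem le_rpow (hμ : ContinuousOn μ (Ioi 0)) (hκ : 0 ≤ κ) (hx₁ : 0 < x₁)
    (hμc : ∀ y, x₁ ≤ y → μ y ≤ -c) (hx : x₁ ≤ x) :
    integratingFactor κ x₁ μ x ≤ (x / x₁) ^ (-(κ * c)) := by
  have hxx₁ : 0 < x / x₁ := div_pos (hx₁.trans_le hx) hx₁
  rw [Real.rpow_def_of_pos hxx₁, integratingFactor, Real.exp_le_exp]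
  calc κ * ∫ y in x₁..x, μ y / y ≤ κ * (-c * Real.log (x / x₁)) :=
        mul_le_mul_of_nonneg_left (intervalIntegral_le_neg_mul_log hμ hx₁ hμc hx) hκ
    _ = Real.log (x / x₁) * -(κ * c) := by ring

theorem le_one (hμ : ContinuousOn μ (Ioi 0)) (hκ : 0 ≤ κ) (hκc : 0 ≤ κ * c) (hx₁ : 0 < x₁)
    (hμc : ∀ y, x₁ ≤ y → μ y ≤ -c) (hx : x₁ ≤ x) :
    integratingFactor κ x₁ μ x ≤ 1 :=
  (le_rpow hμ hκ hx₁ hμc hx).trans <|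
    Real.rpow_le_one_of_one_le_of_nonpos ((one_le_div hx₁).2 hx) (neg_nonpos.2 hκc)

theorem tendsto_mul_nhdsGT_zero (hμ : ContinuousOn μ (Ioi 0)) (hκ : 0 ≤ κ) (hκc : 1 < κ * c)
    (hx₁ : 0 < x₁) (hμc : ∀ y, x₁ ≤ y → μ y ≤ -c) :
    Tendsto (fun x => x * integratingFactor κ x₁ μ x) atTop (𝓝[>] 0) := by
  refine tendsto_nhdsWithin_iff.2 ⟨?_, (eventually_gt_atTop 0).mono fun x hx => mul_pos hx pos⟩
  have hpow : Tendsto (fun x : ℝ => x₁ ^ (κ * c) * x ^ (-(κ * c - 1))) atTop (𝓝 0) := by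
    have := (tendsto_rpow_neg_atTop (show 0 < κ * c - 1 by linarith)).const_mul (x₁ ^ (κ * c))
    rwa [mul_zero] at this
  refine squeeze_zero' ((eventually_gt_atTop 0).mono fun x hx => (mul_pos hx pos).le) ?_ hpow
  filter_upwards [eventually_ge_atTop x₁] with x hx
  have hx0 : 0 < x := hx₁.trans_le hx
  calc x * integratingFactor κ x₁ μ x ≤ x * (x / x₁) ^ (-(κ * c)) :=
        mul_le_mul_of_nonneg_left (le_rpow hμ hκ hx₁ hμc hx) hx0.le
    _ = x₁ ^ (κ * c) * x ^ (-(κ * c - 1)) := by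
        rw [Real.div_rpow hx0.le hx₁.le, Real.rpow_neg hx₁.le,
          show -(κ * c - 1) = 1 + -(κ * c) by ring, Real.rpow_add hx0, Real.rpow_one]
        field_simp

theorem integrableOn_mul (hμ : ContinuousOn μ (Ioi 0)) (hκ : 0 ≤ κ) (hκc : 0 ≤ κ * c)
    (hx₁ : 0 < x₁) (hμc : ∀ y, x₁ ≤ y → μ y ≤ -c) {x₀ : ℝ} (hx₀ : x₁ ≤ x₀) {β : ℝ → ℝ}
    (hβ : IntegrableOn β (Ioi x₀)) :
    IntegrableOn (fun y => integratingFactor κ x₁ μ y * β y) (Ioi x₀) := by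
  have hcont : ContinuousOn (integratingFactor κ x₁ μ) (Ioi x₀) := fun y hy =>
    (hasDerivAt hμ hx₁ (hx₁.trans_le (hx₀.trans hy.out.le))).continuousAt.continuousWithinAt
  refine hβ.bdd_mul (c := 1) (hcont.aestronglyMeasurable measurableSet_Ioi) ?_
  refine (ae_restrict_iff' measurableSet_Ioi).2 (ae_of_all _ fun y hy => ?_)
  rw [Real.norm_of_nonneg pos.le]
  exact le_one hμ hκ hκc hx₁ hμc (hx₀.trans hy.out.le)

end integratingFactor

theorem dichotomy_at_infinity_general (μ φ : ℝ → ℝ) (σ ρ χ c x₁ x₀ : ℝ)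
    (hσ : 0 < σ) (hρ : 0 < ρ) (hχ : 0 < χ)
    (hLoc : LocallyLipschitz μ)
    (hode : ∀ x ∈ Set.Ioi χ,
      HasDerivAt φ (2 * ρ / (σ ^ 2 * x ^ 2) - 2 * μ x / (σ ^ 2 * x) * φ x) x)
    (hc : σ ^ 2 / 2 < c) (hx₁ : χ < x₁) (hμc : ∀ y : ℝ, x₁ ≤ y → μ y < -c)
    (hx₀ : x₁ ≤ x₀) :
    let ζ : ℝ → ℝ := fun x => Real.exp ((2 / σ ^ 2) * ∫ y in x₁..x, μ y / y)
    let J : ℝ := ζ x₀ * φ x₀ + ∫ y in Set.Ioi x₀, ζ y * (2 * ρ / (σ ^ 2 * y ^ 2))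
    (0 < J → Filter.Tendsto (fun x => φ x / x) Filter.atTop Filter.atTop) ∧
    (J ≤ 0 → ∀ x : ℝ, x₀ < x → φ x < 0) := by
  intro ζ J
  have hx₁pos : 0 < x₁ := hχ.trans hx₁
  have hμ : ContinuousOn μ (Ioi 0) := hLoc.continuous.continuousOn
  have hκ : 0 ≤ 2 / σ ^ 2 := by positivity
  have hκc : 1 < 2 / σ ^ 2 * c := by
    rw [div_mul_eq_mul_div, one_lt_div (by positivity)]
    linarith
  have hμc_le : ∀ y, x₁ ≤ y → μ y ≤ -c := fun y hy => (hμc y hy).le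
  have hderiv : ∀ x ∈ Ici x₀,
      HasDerivAt (fun x => ζ x * φ x) (ζ x * (2 * ρ / (σ ^ 2 * x ^ 2))) x := fun x hx =>
    have hxχ : χ < x := hx₁.trans_le (hx₀.trans hx)
    hasDerivAt_mul_of_linear_ode
      (integratingFactor.hasDerivAt (κ := 2 / σ ^ 2) hμ hx₁pos (hχ.trans hxχ))
      ((hode x hxχ).congr_deriv (by ring))
  have hint : IntegrableOn (fun y => ζ y * (2 * ρ / (σ ^ 2 * y ^ 2))) (Ioi x₀) :=
    integratingFactor.integrableOn_mul hμ hκ (by linarith) hx₁pos hμc_le hx₀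
      (integrableOn_Ioi_div_mul_sq (hx₁pos.trans_le hx₀))
  refine ⟨fun hJ => ?_, fun hJ x hx => ?_⟩
  · exact tendsto_div_atTop_of_tendsto_mul hJ (tendsto_add_integral_Ioi_of_hasDerivAt hderiv hint)
      (integratingFactor.tendsto_mul_nhdsGT_zero hμ hκ hκc hx₁pos hμc_le)
  · have hpos : ∀ y ∈ Ioi x₀, 0 < ζ y * (2 * ρ / (σ ^ 2 * y ^ 2)) := fun y hy =>
      have hy0 : 0 < y := hx₁pos.trans_le (hx₀.trans hy.out.le)
      mul_pos integratingFactor.pos (by positivity)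
    exact neg_of_mul_neg_right
      ((lt_add_integral_Ioi_of_hasDerivAt_pos hderiv hint hpos hx.le).trans_le hJ)
      integratingFactor.pos.le

/-- Dichotomy at infinity: for φ solving φ' + (2μ/(σ²x))φ = 2ρ/(σ²x²) on (χ,∞),
with integrating factor ζ, if J := ζ(x₀)φ(x₀) + ∫_{x₀}^∞ ζ(y)·2ρ/(σ²y²) dy > 0
then φ(x)/x → +∞; if J ≤ 0 then φ < 0 on (x₀,∞). -/
theorem dichotomy_at_infinity (μ φ : ℝ → ℝ) (σ M ρ χ c x₁ x₀ : ℝ)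
    (hσ : 0 < σ) (hM : 0 < M) (hρ : 0 < ρ) (hχ : 0 < χ)
    (hLoc : LocallyLipschitz μ) (hanti : StrictAntiOn μ (Set.Ici 0))
    (htend : Filter.Tendsto μ Filter.atTop Filter.atBot)
    (hode : ∀ x ∈ Set.Ioi χ,
      HasDerivAt φ (2 * ρ / (σ ^ 2 * x ^ 2) - 2 * μ x / (σ ^ 2 * x) * φ x) x)
    (hc : σ ^ 2 / 2 < c) (hx₁ : χ < x₁) (hμc : ∀ y : ℝ, x₁ ≤ y → μ y < -c)
    (hx₀ : x₁ ≤ x₀) :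
    let ζ : ℝ → ℝ := fun x => Real.exp ((2 / σ ^ 2) * ∫ y in x₁..x, μ y / y)
    let J : ℝ := ζ x₀ * φ x₀ + ∫ y in Set.Ioi x₀, ζ y * (2 * ρ / (σ ^ 2 * y ^ 2))
    (0 < J → Filter.Tendsto (fun x => φ x / x) Filter.atTop Filter.atTop) ∧
    (J ≤ 0 → ∀ x : ℝ, x₀ < x → φ x < 0) :=
  dichotomy_at_infinity_general μ φ σ ρ χ c x₁ x₀ hσ hρ hχ hLoc hode hc hx₁ hμc hx₀
end

section
/- Let ρ, σ > 0 and μ : [0,∞) → ℝ continuous with g(x) := ρ - xμ(x) having the sign structure: g > 0 on [0,α₁), g < 0 on (α₁,α₂), g > 0 on (α₂,∞) for some 0 < α₁ < α₂. Suppose φ : (0,∞) → ℝ is C¹ and satisfies: whenever φ(x₀) = 1, φ'(x₀) = 2g(x₀)/(σ²x₀²). Then φ can cross the level 1 from below (i.e., φ(x₀) = 1 and φ'(x₀) > 0) only at points x₀ ∈ (0,α₁) ∪ (α₂,∞), and from above (φ'(x₀) < 0) only at points x₀ ∈ (α₁,α₂). Moreover, between two consecutive crossings on any interval where g has constant sign,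 the crossing directions must alternate, so φ crosses the level 1 at most three times on (0,∞). -/
/-!
At a point where `φ = 1` the HJB relation gives `φ'` the sign of `g`. On an interval where
this sign is constant, `φ` can meet the level `1` only once: after an up-crossing `φ` stays
above `1` until it returns to that level, and there it must arrive from above, i.e. cross
downwards. Since `g` vanishes at `α₁` and `α₂` by continuity, every transversal crossing lies
in one of the three intervals `(0, α₁)`, `(α₁, α₂)`, `(α₂, ∞)`, each holding at most one.
-/

open Set Filter Topology SignType

theorem eventually_nhdsLT_lt_of_deriv_pos {f : ℝ → ℝ} {x₀ : ℝ} (hf : 0 < deriv f x₀) :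
    ∀ᶠ x in 𝓝[<] x₀, f x < f x₀ := by
  have hslope := hasDerivAt_iff_tendsto_slope.mp
    (differentiableAt_of_deriv_ne_zero hf.ne').hasDerivAt
  filter_upwards [nhdsLT_le_nhdsNE x₀ (hslope.eventually (eventually_gt_nhds hf)),
    self_mem_nhdsWithin] with x hx (hlt : x < x₀)
  exact (slope_pos_iff_gt hlt).mp hx

theorem eventually_nhdsGT_gt_of_deriv_pos {f : ℝ → ℝ} {x₀ : ℝ} (hf : 0 < deriv f x₀) :
    ∀ᶠ x in 𝓝[>] x₀, f x₀ < f x := by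
  have hslope := hasDerivAt_iff_tendsto_slope.mp
    (differentiableAt_of_deriv_ne_zero hf.ne').hasDerivAt
  filter_upwards [nhdsGT_le_nhdsNE x₀ (hslope.eventually (eventually_gt_nhds hf)),
    self_mem_nhdsWithin] with x hx (hlt : x₀ < x)
  exact (slope_pos_iff hlt).mp hx

theorem not_lt_of_mem_levelSet_of_deriv_pos {f : ℝ → ℝ} {s : Set ℝ} {c a b : ℝ}
    (hs : s.OrdConnected) (hf : ContinuousOn f s)
    (hpos : ∀ x ∈ s, f x = c → 0 < deriv f x)
    (ha : a ∈ s) (hfa : f a = c) (hb : b ∈ s) (hfb : f b = c) : ¬ a < b := by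
  intro hab
  obtain ⟨x₁, hfx₁, hx₁⟩ := ((eventually_nhdsGT_gt_of_deriv_pos (hpos a ha hfa)).and
    (Ioo_mem_nhdsGT hab)).exists
  rw [hfa] at hfx₁
  have hsub : Icc x₁ b ⊆ s := (Icc_subset_Icc_left hx₁.1.le).trans (hs.out ha hb)
  -- the first return of `f` to the level `c` after `x₁`
  set K := Icc x₁ b ∩ f ⁻¹' {c}
  have hK : IsCompact K := isCompact_Icc.of_isClosed_subset
    ((hf.mono hsub).preimage_isClosed_of_isClosed isClosed_Icc isClosed_singleton)
    inter_subset_left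
  obtain ⟨m, ⟨hm, hfm⟩, hmin⟩ := hK.exists_isLeast ⟨b, ⟨hx₁.2.le, le_rfl⟩, hfb⟩
  have hx₁m : x₁ < m := hm.1.lt_of_ne (by rintro rfl; exact hfx₁.ne' hfm)
  obtain ⟨y, hfy, hy⟩ := ((eventually_nhdsLT_lt_of_deriv_pos (hpos m (hsub hm) hfm)).and
    (Ioo_mem_nhdsLT hx₁m)).exists
  rw [show f m = c from hfm] at hfy
  have hyb : y ≤ b := (hy.2.trans_le hm.2).le
  obtain ⟨z, hz, hfz⟩ := intermediate_value_Icc' hy.1.le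
    (hf.mono ((Icc_subset_Icc_right hyb).trans hsub)) ⟨hfy.le, hfx₁.le⟩
  exact (hz.2.trans_lt hy.2).not_ge (hmin ⟨⟨hz.1, hz.2.trans hyb⟩, hfz⟩)

theorem subsingleton_levelSet_of_deriv_pos {f : ℝ → ℝ} {s : Set ℝ} {c : ℝ}
    (hs : s.OrdConnected) (hf : ContinuousOn f s) (hpos : ∀ x ∈ s, f x = c → 0 < deriv f x) :
    {x ∈ s | f x = c}.Subsingleton := fun _ ⟨ha, hfa⟩ _ ⟨hb, hfb⟩ =>
  le_antisymm (not_lt.mp (not_lt_of_mem_levelSet_of_deriv_pos hs hf hpos hb hfb ha hfa))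
    (not_lt.mp (not_lt_of_mem_levelSet_of_deriv_pos hs hf hpos ha hfa hb hfb))

theorem subsingleton_levelSet_of_deriv_neg {f : ℝ → ℝ} {s : Set ℝ} {c : ℝ}
    (hs : s.OrdConnected) (hf : ContinuousOn f s) (hneg : ∀ x ∈ s, f x = c → deriv f x < 0) :
    {x ∈ s | f x = c}.Subsingleton := by
  simpa using subsingleton_levelSet_of_deriv_pos (f := fun x => -f x) (c := -c) hs hf.neg
    (fun x hx hfx => by simpa [deriv.fun_neg] using hneg x hx (neg_inj.mp hfx))

theorem finite_and_ncard_le_three_of_subset_union {α : Type*} {s A B C : Set α}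
    (hA : A.Subsingleton) (hB : B.Subsingleton) (hC : C.Subsingleton) (hs : s ⊆ A ∪ B ∪ C) :
    s.Finite ∧ s.ncard ≤ 3 := by
  rw [← encard_le_coe_iff_finite_ncard_le]
  calc s.encard ≤ (A ∪ B ∪ C).encard := encard_le_encard hs
    _ ≤ A.encard + B.encard + C.encard :=
      (encard_union_le _ _).trans (add_le_add_left (encard_union_le _ _) _)
    _ ≤ 1 + 1 + 1 := by
      gcongr <;> exact encard_le_one_iff_subsingleton.mpr ‹_›
    _ = 3 := by norm_num

theorem ContinuousAt.eq_zero_of_eventually_nonneg_of_eventually_nonpos {X : Type*}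
    [TopologicalSpace X] {g : X → ℝ} {a : X} {l l' : Filter X} [l.NeBot] [l'.NeBot]
    (hg : ContinuousAt g a) (hl : l ≤ 𝓝 a) (hl' : l' ≤ 𝓝 a)
    (h : ∀ᶠ x in l, 0 ≤ g x) (h' : ∀ᶠ x in l', g x ≤ 0) : g a = 0 :=
  le_antisymm (le_of_tendsto (hg.mono_left hl') h') (ge_of_tendsto (hg.mono_left hl) h)

section SignPattern

variable {g : ℝ → ℝ} {α₁ α₂ : ℝ}

theorem eq_zero_and_eq_zero_of_sign_pattern (hα : 0 < α₁) (hαα : α₁ < α₂)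
    (hc₁ : ContinuousAt g α₁) (hc₂ : ContinuousAt g α₂) (h₁ : ∀ x ∈ Ioo 0 α₁, 0 < g x)
    (h₂ : ∀ x ∈ Ioo α₁ α₂, g x < 0) (h₃ : ∀ x ∈ Ioi α₂, 0 < g x) :
    g α₁ = 0 ∧ g α₂ = 0 :=
  ⟨hc₁.eq_zero_of_eventually_nonneg_of_eventually_nonpos nhdsWithin_le_nhds nhdsWithin_le_nhds
      (mem_of_superset (Ioo_mem_nhdsLT hα) fun x hx => (h₁ x hx).le)
      (mem_of_superset (Ioo_mem_nhdsGT hαα) fun x hx => (h₂ x hx).le),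
    hc₂.eq_zero_of_eventually_nonneg_of_eventually_nonpos nhdsWithin_le_nhds nhdsWithin_le_nhds
      (mem_of_superset self_mem_nhdsWithin fun x hx => (h₃ x hx).le)
      (mem_of_superset (Ioo_mem_nhdsLT hαα) fun x hx => (h₂ x hx).le)⟩

theorem mem_Ioo_union_Ioi_of_pos {x : ℝ} (h₂ : ∀ x ∈ Ioo α₁ α₂, g x < 0) (hg₁ : g α₁ = 0)
    (hg₂ : g α₂ = 0) (hx : 0 < x) (hgx : 0 < g x) : x ∈ Ioo 0 α₁ ∪ Ioi α₂ := by
  rcases lt_trichotomy x α₁ with h | rfl | h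
  · exact Or.inl ⟨hx, h⟩
  · linarith
  rcases lt_trichotomy x α₂ with h' | rfl | h'
  · linarith [h₂ x ⟨h, h'⟩]
  · linarith
  · exact Or.inr h'

theorem mem_Ioo_of_neg {x : ℝ} (h₁ : ∀ x ∈ Ioo 0 α₁, 0 < g x) (h₃ : ∀ x ∈ Ioi α₂, 0 < g x)
    (hg₁ : g α₁ = 0) (hg₂ : g α₂ = 0) (hx : 0 < x) (hgx : g x < 0) : x ∈ Ioo α₁ α₂ := by
  rcases lt_trichotomy x α₁ with h | rfl | h
  · linarith [h₁ x ⟨hx, h⟩]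
  · linarith
  rcases lt_trichotomy x α₂ with h' | rfl | h'
  · exact ⟨h, h'⟩
  · linarith
  · linarith [h₃ x h']

theorem finite_and_ncard_le_three_of_sign_pattern {φ : ℝ → ℝ} (hα : 0 < α₁) (hαα : α₁ < α₂)
    (hφ : ContinuousOn φ (Ioi 0)) (h₁ : ∀ x ∈ Ioo 0 α₁, 0 < g x)
    (h₂ : ∀ x ∈ Ioo α₁ α₂, g x < 0) (h₃ : ∀ x ∈ Ioi α₂, 0 < g x) (hg₁ : g α₁ = 0)
    (hg₂ : g α₂ = 0) (hpos : ∀ x, 0 < x → φ x = 1 → (0 < deriv φ x ↔ 0 < g x))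
    (hneg : ∀ x, 0 < x → φ x = 1 → (deriv φ x < 0 ↔ g x < 0)) :
    {x : ℝ | 0 < x ∧ φ x = 1 ∧ deriv φ x ≠ 0}.Finite ∧
      {x : ℝ | 0 < x ∧ φ x = 1 ∧ deriv φ x ≠ 0}.ncard ≤ 3 := by
  have hA := subsingleton_levelSet_of_deriv_pos ordConnected_Ioo (hφ.mono Ioo_subset_Ioi_self)
    fun x hx h1 => (hpos x hx.1 h1).mpr (h₁ x hx)
  have hB := subsingleton_levelSet_of_deriv_neg ordConnected_Ioo
    (hφ.mono (Ioo_subset_Ioi_self.trans (Ioi_subset_Ioi hα.le))) fun x hx h1 =>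
      (hneg x (hα.trans hx.1) h1).mpr (h₂ x hx)
  have hC := subsingleton_levelSet_of_deriv_pos ordConnected_Ioi
    (hφ.mono (Ioi_subset_Ioi (hα.trans hαα).le)) fun x hx h1 =>
      (hpos x ((hα.trans hαα).trans hx) h1).mpr (h₃ x hx)
  refine finite_and_ncard_le_three_of_subset_union hA hB hC ?_
  rintro x ⟨hx, h1, hd⟩
  rcases hd.lt_or_gt with hd | hd
  · exact Or.inl (Or.inr ⟨mem_Ioo_of_neg h₁ h₃ hg₁ hg₂ hx ((hneg x hx h1).mp hd), h1⟩)
  · rcases mem_Ioo_union_Ioi_of_pos h₂ hg₁ hg₂ hx ((hpos x hx h1).mp hd) with h | h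
    exacts [Or.inl (Or.inl ⟨h, h1⟩), Or.inr ⟨h, h1⟩]

end SignPattern

theorem crossing_directions_general (μ φ : ℝ → ℝ) (ρ σ α₁ α₂ : ℝ)
    (hσ : 0 < σ) (hα : 0 < α₁) (hαα : α₁ < α₂)
    (hcont : ContinuousOn μ (Set.Ici 0))
    (hg1 : ∀ x ∈ Set.Ico (0 : ℝ) α₁, 0 < ρ - x * μ x)
    (hg2 : ∀ x ∈ Set.Ioo α₁ α₂, ρ - x * μ x < 0)
    (hg3 : ∀ x ∈ Set.Ioi α₂, 0 < ρ - x * μ x)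
    (hdiff : ∀ x ∈ Set.Ioi (0 : ℝ), DifferentiableAt ℝ φ x)
    (hHJB : ∀ x₀ : ℝ, 0 < x₀ → φ x₀ = 1 →
      deriv φ x₀ = 2 * (ρ - x₀ * μ x₀) / (σ ^ 2 * x₀ ^ 2)) :
    (∀ x₀ : ℝ, 0 < x₀ → φ x₀ = 1 → 0 < deriv φ x₀ →
      x₀ ∈ Set.Ioo 0 α₁ ∪ Set.Ioi α₂) ∧
    (∀ x₀ : ℝ, 0 < x₀ → φ x₀ = 1 → deriv φ x₀ < 0 →
      x₀ ∈ Set.Ioo α₁ α₂) ∧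
    {x : ℝ | 0 < x ∧ φ x = 1 ∧ deriv φ x ≠ 0}.Finite ∧
    {x : ℝ | 0 < x ∧ φ x = 1 ∧ deriv φ x ≠ 0}.ncard ≤ 3 := by
  set g : ℝ → ℝ := fun x => ρ - x * μ x
  have hgc : ∀ x, 0 < x → ContinuousAt g x := fun x hx =>
    continuousAt_const.sub (continuousAt_id.mul (hcont.continuousAt (Ici_mem_nhds hx)))
  have hg1' : ∀ x ∈ Ioo 0 α₁, 0 < g x := fun x hx => hg1 x (Ioo_subset_Ico_self hx)
  obtain ⟨hg₁, hg₂⟩ := eq_zero_and_eq_zero_of_sign_pattern hα hαα (hgc α₁ hα)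
    (hgc α₂ (hα.trans hαα)) hg1' hg2 hg3
  have hsign : ∀ x, 0 < x → φ x = 1 → sign (deriv φ x) = sign (g x) := fun x hx h1 => by
    rw [hHJB x hx h1, mul_div_right_comm, sign_mul,
      sign_pos (by positivity : (0 : ℝ) < 2 / (σ ^ 2 * x ^ 2)), one_mul]
  have hpos : ∀ x, 0 < x → φ x = 1 → (0 < deriv φ x ↔ 0 < g x) := fun x hx h1 => by
    rw [← sign_eq_one_iff, hsign x hx h1, sign_eq_one_iff]
  have hneg : ∀ x, 0 < x → φ x = 1 → (deriv φ x < 0 ↔ g x < 0) := fun x hx h1 => by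
    rw [← sign_eq_neg_one_iff, hsign x hx h1, sign_eq_neg_one_iff]
  refine ⟨fun x hx h1 hd => mem_Ioo_union_Ioi_of_pos hg2 hg₁ hg₂ hx ((hpos x hx h1).mp hd),
    fun x hx h1 hd => mem_Ioo_of_neg hg1' hg3 hg₁ hg₂ hx ((hneg x hx h1).mp hd), ?_⟩
  exact finite_and_ncard_le_three_of_sign_pattern hα hαα
    (fun x hx => (hdiff x hx).continuousAt.continuousWithinAt) hg1' hg2 hg3 hg₁ hg₂ hpos hneg

/-- Crossing directions for the derivative of the value function: given the sign
structure of g(x) = ρ - xμ(x) and the HJB relation φ'(x₀) = 2g(x₀)/(σ²x₀²)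
whenever φ(x₀) = 1, up-crossings of level 1 occur only in (0,α₁) ∪ (α₂,∞),
down-crossings only in (α₁,α₂), and φ crosses level 1 at most three times. -/
theorem crossing_directions (μ φ : ℝ → ℝ) (ρ σ α₁ α₂ : ℝ)
    (hρ : 0 < ρ) (hσ : 0 < σ) (hα : 0 < α₁) (hαα : α₁ < α₂)
    (hcont : ContinuousOn μ (Set.Ici 0))
    (hg1 : ∀ x ∈ Set.Ico (0 : ℝ) α₁, 0 < ρ - x * μ x)
    (hg2 : ∀ x ∈ Set.Ioo α₁ α₂, ρ - x * μ x < 0)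
    (hg3 : ∀ x ∈ Set.Ioi α₂, 0 < ρ - x * μ x)
    (hdiff : ∀ x ∈ Set.Ioi (0 : ℝ), DifferentiableAt ℝ φ x)
    (hHJB : ∀ x₀ : ℝ, 0 < x₀ → φ x₀ = 1 →
      deriv φ x₀ = 2 * (ρ - x₀ * μ x₀) / (σ ^ 2 * x₀ ^ 2)) :
    (∀ x₀ : ℝ, 0 < x₀ → φ x₀ = 1 → 0 < deriv φ x₀ →
      x₀ ∈ Set.Ioo 0 α₁ ∪ Set.Ioi α₂) ∧
    (∀ x₀ : ℝ, 0 < x₀ → φ x₀ = 1 → deriv φ x₀ < 0 →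
      x₀ ∈ Set.Ioo α₁ α₂) ∧
    {x : ℝ | 0 < x ∧ φ x = 1 ∧ deriv φ x ≠ 0}.Finite ∧
    {x : ℝ | 0 < x ∧ φ x = 1 ∧ deriv φ x ≠ 0}.ncard ≤ 3 :=
  crossing_directions_general μ φ ρ σ α₁ α₂ hσ hα hαα hcont hg1 hg2 hg3 hdiff hHJB
end
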